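/- arXiv:1810.04900 — 3 statements merged into one kernel-verified Lean document; each statement's English description precedes it below -/
import Mathlib

section
/- Let μ and ν be probability measures on a measurable space (X, 𝒳) admitting densities f and g with respect to a σ-finite measure λ. Define the maximal coupling η on X × X by η(B) = ∫_X 1_B(u,u) min(f(u), g(u)) λ(du) + (1 - ∫ min(f,g) dλ)^{-1} · ∬ 1_B(x,y) (f(x) - min(f,g)(x)) (g(y) - min(f,g)(y)) λ(dx) λ(dy) when ∫ min(f,g) dλ < 1 (and η concentrated on the diagonal otherwise). Then the first marginal of η is μ and the second marginal of η is ν. -/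
open MeasureTheory ENNReal

/-!
Write `ρ = min f g • λ`, `α = (f - min f g) • λ` and `β = (g - min f g) • λ`, so that `μ = ρ + α`,
`ν = ρ + β` and `α`, `β` both have mass `1 - ∫ min f g dλ`. The diagonal part of `η` projects to
`ρ` on each side, and the normalised product `(1 - ∫ min f g dλ)⁻¹ • α ⊗ β` projects to `α` and `β`.
-/

namespace MeasureTheory

variable {X : Type*} [MeasurableSpace X]

lemma Measure.map_fst_diag_add_smul_prod (ρ α β : Measure X) [IsFiniteMeasure β] {c : ℝ≥0∞}
    (hβ : β Set.univ = c) (hc : c ≠ 0) :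
    (ρ.map (fun u => (u, u)) + c⁻¹ • α.prod β).map Prod.fst = ρ + α := by
  have hc_top : c ≠ ∞ := hβ ▸ measure_ne_top β Set.univ
  rw [Measure.map_add _ _ measurable_fst, Measure.map_smul, Measure.map_fst_prod, hβ, smul_smul,
    ENNReal.inv_mul_cancel hc hc_top, one_smul,
    Measure.map_map measurable_fst (by fun_prop : Measurable fun u : X => (u, u))]
  exact congrArg (· + α) Measure.map_id

lemma Measure.map_snd_diag_add_smul_prod (ρ α β : Measure X) [IsFiniteMeasure α]
    [IsFiniteMeasure β] {c : ℝ≥0∞} (hα : α Set.univ = c) (hc : c ≠ 0) :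
    (ρ.map (fun u => (u, u)) + c⁻¹ • α.prod β).map Prod.snd = ρ + β := by
  have hc_top : c ≠ ∞ := hα ▸ measure_ne_top α Set.univ
  rw [Measure.map_add _ _ measurable_snd, Measure.map_smul, Measure.map_snd_prod, hα, smul_smul,
    ENNReal.inv_mul_cancel hc hc_top, one_smul,
    Measure.map_map measurable_snd (by fun_prop : Measurable fun u : X => (u, u))]
  exact congrArg (· + β) Measure.map_id

lemma withDensity_eq_withDensity_add_withDensity_sub (lam : Measure X) {f h : X → ℝ≥0∞}
    (hh : Measurable h) (hle : h ≤ f) :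
    lam.withDensity f = lam.withDensity h + lam.withDensity (fun x => f x - h x) := by
  rw [← withDensity_add_left hh]
  congr 1
  funext x
  exact (add_tsub_cancel_of_le (hle x)).symm

lemma measure_univ_eq_one_sub_of_add_eq {ρ α μ : Measure X} [IsProbabilityMeasure μ]
    (h : μ = ρ + α) : α Set.univ = 1 - ρ Set.univ :=
  ENNReal.eq_sub_of_add_eq' one_ne_top (by rw [add_comm, ← Measure.add_apply, ← h, measure_univ])

end MeasureTheory

theorem stmt0_general {X : Type*} [MeasurableSpace X] (lam : Measure X)
    (f g : X → ℝ≥0∞) (hf : Measurable f) (hg : Measurable g)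
    (μ ν : Measure X) [IsProbabilityMeasure μ] [IsProbabilityMeasure ν]
    (hμ : μ = lam.withDensity f) (hν : ν = lam.withDensity g)
    (hlt : ∫⁻ x, min (f x) (g x) ∂lam < 1)
    (η : Measure (X × X))
    (hη : η = (lam.withDensity (fun u => min (f u) (g u))).map (fun u => (u, u))
        + (1 - ∫⁻ x, min (f x) (g x) ∂lam)⁻¹ •
          ((lam.withDensity (fun x => f x - min (f x) (g x))).prod
            (lam.withDensity (fun y => g y - min (f y) (g y))))) :
    η.map Prod.fst = μ ∧ η.map Prod.snd = ν := by
  have hmin : Measurable fun x => min (f x) (g x) := hf.min hg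
  have hμ_split := hμ.trans (withDensity_eq_withDensity_add_withDensity_sub lam hmin
    fun x => min_le_left (f x) (g x))
  have hν_split := hν.trans (withDensity_eq_withDensity_add_withDensity_sub lam hmin
    fun x => min_le_right (f x) (g x))
  have hρ : lam.withDensity (fun x => min (f x) (g x)) Set.univ = ∫⁻ x, min (f x) (g x) ∂lam := by
    rw [withDensity_apply _ MeasurableSet.univ, setLIntegral_univ]
  have hα := measure_univ_eq_one_sub_of_add_eq hμ_split
  have hβ := measure_univ_eq_one_sub_of_add_eq hν_split
  rw [hρ] at hα hβ
  have hc : 1 - ∫⁻ x, min (f x) (g x) ∂lam ≠ 0 := (tsub_pos_of_lt hlt).ne'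
  have hc_top : 1 - ∫⁻ x, min (f x) (g x) ∂lam ≠ ∞ := sub_ne_top one_ne_top
  have : IsFiniteMeasure (lam.withDensity fun x => f x - min (f x) (g x)) := ⟨hα ▸ hc_top.lt_top⟩
  have : IsFiniteMeasure (lam.withDensity fun y => g y - min (f y) (g y)) := ⟨hβ ▸ hc_top.lt_top⟩
  rw [hη, hμ_split, hν_split]
  exact ⟨Measure.map_fst_diag_add_smul_prod _ _ _ hβ hc,
    Measure.map_snd_diag_add_smul_prod _ _ _ hα hc⟩

/-- The maximal coupling of two probability measures with densities `f`, `g`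
w.r.t. a σ-finite measure has first marginal `μ` and second marginal `ν`. -/
theorem stmt0 {X : Type*} [MeasurableSpace X] (lam : Measure X) [SigmaFinite lam]
    (f g : X → ℝ≥0∞) (hf : Measurable f) (hg : Measurable g)
    (μ ν : Measure X) [IsProbabilityMeasure μ] [IsProbabilityMeasure ν]
    (hμ : μ = lam.withDensity f) (hν : ν = lam.withDensity g)
    (hlt : ∫⁻ x, min (f x) (g x) ∂lam < 1)
    (η : Measure (X × X))
    (hη : η = (lam.withDensity (fun u => min (f u) (g u))).map (fun u => (u, u))
        + (1 - ∫⁻ x, min (f x) (g x) ∂lam)⁻¹ •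
          ((lam.withDensity (fun x => f x - min (f x) (g x))).prod
            (lam.withDensity (fun y => g y - min (f y) (g y))))) :
    η.map Prod.fst = μ ∧ η.map Prod.snd = ν :=
  stmt0_general lam f g hf hg μ ν hμ hν hlt η hη
end

section
/- With the maximal coupling η of μ and ν as above, η of the complement of the diagonal equals the total variation distance between μ and ν, i.e. η({(x,y) : x ≠ y}) = ‖μ − ν‖_tv, where ‖μ − ν‖_tv = sup_{B ∈ 𝒳} |μ(B) − ν(B)| = 1 − ∫ min(f,g) dλ. -/
open MeasureTheory ENNReal

/-!
In `ℝ≥0∞` one has `a - min a b = a - b`, so the two residual densities are `(f - g)₊` and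
`(g - f)₊`, each of mass `1 - ∫ min(f,g)`. They live on the disjoint sets `{g < f}` and
`{f < g}`, so the product of the residual measures charges only the off-diagonal, while the
first summand of `η` lives on the diagonal; this gives `η {x ≠ y} = 1 - ∫ min(f,g)`. For the
total variation, `μ B - ν B ≤ ∫_B (f - g)₊ ≤ ∫ (f - g)₊` for every `B`, with
equality at `B = {g < f}`.
-/

namespace MeasureTheory

section Densities

variable {X : Type*} [MeasurableSpace X] {lam : Measure X} {f g : X → ℝ≥0∞}

theorem lintegral_tsub_eq_sub_lintegral_min (hf : Measurable f) (hg : Measurable g)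
    (hfg : ∫⁻ x, min (f x) (g x) ∂lam ≠ ∞) :
    ∫⁻ x, f x - g x ∂lam = ∫⁻ x, f x ∂lam - ∫⁻ x, min (f x) (g x) ∂lam := by
  rw [← lintegral_sub (hf.min hg) hfg (ae_of_all _ fun x => min_le_left _ _)]
  simp_rw [tsub_min]

theorem withDensity_tsub_apply_setOf_le (hf : Measurable f) (hg : Measurable g) :
    lam.withDensity (fun x => f x - g x) {x | f x ≤ g x} = 0 := by
  have hs : MeasurableSet {x | f x ≤ g x} := measurableSet_le hf hg
  rw [withDensity_apply _ hs, setLIntegral_congr_fun hs fun x hx => tsub_eq_zero_of_le hx,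
    lintegral_zero]

theorem withDensity_apply_tsub_withDensity_apply_le (hg : Measurable g) {B : Set X}
    (hB : MeasurableSet B) :
    lam.withDensity f B - lam.withDensity g B ≤ ∫⁻ x, f x - g x ∂lam := by
  rw [withDensity_apply _ hB, withDensity_apply _ hB, tsub_le_iff_right]
  calc ∫⁻ x in B, f x ∂lam
      ≤ ∫⁻ x in B, (f x - g x) + g x ∂lam := lintegral_mono fun x => le_tsub_add
    _ = ∫⁻ x in B, f x - g x ∂lam + ∫⁻ x in B, g x ∂lam := lintegral_add_right _ hg
    _ ≤ ∫⁻ x, f x - g x ∂lam + ∫⁻ x in B, g x ∂lam :=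
      add_le_add (setLIntegral_le_lintegral _ _) le_rfl

theorem withDensity_apply_setOf_lt_tsub (hf : Measurable f) (hg : Measurable g)
    [IsFiniteMeasure (lam.withDensity g)] :
    lam.withDensity f {x | g x < f x} - lam.withDensity g {x | g x < f x}
      = ∫⁻ x, f x - g x ∂lam := by
  have hB : MeasurableSet {x | g x < f x} := measurableSet_lt hg hf
  have hg_fin : ∫⁻ x in {x | g x < f x}, g x ∂lam ≠ ∞ := by
    rw [← withDensity_apply _ hB]; exact measure_ne_top _ _
  rw [withDensity_apply _ hB, withDensity_apply _ hB,
    ← lintegral_sub hg hg_fin (ae_restrict_of_forall_mem hB fun x hx => hx.le)]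
  exact setLIntegral_eq_of_support_subset fun x hx =>
    tsub_pos_iff_lt.1 (pos_iff_ne_zero.2 hx)

theorem iSup_max_withDensity_tsub_eq (hf : Measurable f) (hg : Measurable g)
    [IsFiniteMeasure (lam.withDensity f)] [IsFiniteMeasure (lam.withDensity g)] :
    (⨆ B ∈ {B : Set X | MeasurableSet B},
      max (lam.withDensity f B - lam.withDensity g B) (lam.withDensity g B - lam.withDensity f B))
      = max (∫⁻ x, f x - g x ∂lam) (∫⁻ x, g x - f x ∂lam) := by
  refine le_antisymm (iSup₂_le fun B hB => max_le_max
    (withDensity_apply_tsub_withDensity_apply_le hg hB)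
    (withDensity_apply_tsub_withDensity_apply_le hf hB)) (max_le ?_ ?_)
  · exact le_iSup₂_of_le _ (measurableSet_lt hg hf)
      ((withDensity_apply_setOf_lt_tsub hf hg).ge.trans (le_max_left _ _))
  · exact le_iSup₂_of_le _ (measurableSet_lt hf hg)
      ((withDensity_apply_setOf_lt_tsub hg hf).ge.trans (le_max_right _ _))

end Densities

namespace Measure

variable {α : Type*} [MeasurableSpace α]

theorem prod_setOf_ne_of_null_compl {μ ν : Measure α} [SFinite ν] {s : Set α}
    (hμ : μ s = 0) (hν : ν sᶜ = 0) :
    μ.prod ν {p | p.1 ≠ p.2} = μ Set.univ * ν Set.univ := by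
  refine le_antisymm ?_ ?_
  · calc μ.prod ν {p | p.1 ≠ p.2} ≤ μ.prod ν Set.univ := measure_mono (Set.subset_univ _)
      _ = μ Set.univ * ν Set.univ := by rw [← Set.univ_prod_univ, prod_prod]
  · calc μ Set.univ * ν Set.univ = μ sᶜ * ν s := by
          rw [measure_congr ((ae_eq_univ (s := sᶜ)).2 (by rwa [compl_compl])),
            measure_congr ((ae_eq_univ (s := s)).2 hν)]
      _ = μ.prod ν (sᶜ ×ˢ s) := (prod_prod _ _).symm
      _ ≤ μ.prod ν {p | p.1 ≠ p.2} := measure_mono fun p hp heq => hp.1 (heq ▸ hp.2)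

theorem map_diag_apply_setOf_ne (hdiag : MeasurableSet {p : α × α | p.1 = p.2})
    (μ : Measure α) : μ.map (fun u => (u, u)) {p | p.1 ≠ p.2} = 0 :=
  (map_apply (by fun_prop) hdiag.compl).trans (by simp)

end Measure

end MeasureTheory

theorem stmt1_general {X : Type*} [MeasurableSpace X] (lam : Measure X)
    (f g : X → ℝ≥0∞) (hf : Measurable f) (hg : Measurable g)
    (μ ν : Measure X) [IsProbabilityMeasure μ] [IsProbabilityMeasure ν]
    (hμ : μ = lam.withDensity f) (hν : ν = lam.withDensity g)
    (hlt : ∫⁻ x, min (f x) (g x) ∂lam < 1)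
    (hdiag : MeasurableSet {p : X × X | p.1 = p.2})
    (η : Measure (X × X))
    (hη : η = (lam.withDensity (fun u => min (f u) (g u))).map (fun u => (u, u))
        + (1 - ∫⁻ x, min (f x) (g x) ∂lam)⁻¹ •
          ((lam.withDensity (fun x => f x - min (f x) (g x))).prod
            (lam.withDensity (fun y => g y - min (f y) (g y))))) :
    η {p : X × X | p.1 ≠ p.2} = 1 - ∫⁻ x, min (f x) (g x) ∂lam ∧
    (⨆ B ∈ {B : Set X | MeasurableSet B}, max (μ B - ν B) (ν B - μ B))
      = 1 - ∫⁻ x, min (f x) (g x) ∂lam := by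
  subst hμ hν hη
  have hmin_fin : ∫⁻ x, min (f x) (g x) ∂lam ≠ ∞ := (hlt.trans one_lt_top).ne
  have hf_one : ∫⁻ x, f x ∂lam = 1 := by
    rw [← setLIntegral_univ, ← withDensity_apply _ .univ, measure_univ]
  have hg_one : ∫⁻ x, g x ∂lam = 1 := by
    rw [← setLIntegral_univ, ← withDensity_apply _ .univ, measure_univ]
  have hfg : ∫⁻ x, f x - g x ∂lam = 1 - ∫⁻ x, min (f x) (g x) ∂lam := by
    rw [lintegral_tsub_eq_sub_lintegral_min hf hg hmin_fin, hf_one]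
  have hgf : ∫⁻ x, g x - f x ∂lam = 1 - ∫⁻ x, min (f x) (g x) ∂lam := by
    simp_rw [min_comm (f _)] at hmin_fin ⊢
    rw [lintegral_tsub_eq_sub_lintegral_min hg hf hmin_fin, hg_one]
  refine ⟨?_, by rw [iSup_max_withDensity_tsub_eq hf hg, hfg, hgf, max_self]⟩
  have hres_f : (fun x => f x - min (f x) (g x)) = fun x => f x - g x := by simp_rw [tsub_min]
  have hres_g : (fun y => g y - min (f y) (g y)) = fun y => g y - f y := by
    simp_rw [min_comm (f _), tsub_min]
  have hc_ne_zero : 1 - ∫⁻ x, min (f x) (g x) ∂lam ≠ 0 := (tsub_pos_of_lt hlt).ne'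
  have hc_ne_top : 1 - ∫⁻ x, min (f x) (g x) ∂lam ≠ ∞ := sub_ne_top one_ne_top
  have := isFiniteMeasure_withDensity (hgf ▸ hc_ne_top)
  have hg_null : lam.withDensity (fun y => g y - f y) {x | f x ≤ g x}ᶜ = 0 :=
    measure_mono_null (fun x (hx : ¬ f x ≤ g x) => (not_le.1 hx).le)
      (withDensity_tsub_apply_setOf_le hg hf)
  have hprod :=
    Measure.prod_setOf_ne_of_null_compl (withDensity_tsub_apply_setOf_le (lam := lam) hf hg) hg_null
  rw [withDensity_apply _ .univ, withDensity_apply _ .univ, setLIntegral_univ, setLIntegral_univ,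
    hfg, hgf] at hprod
  rw [Measure.add_apply, Measure.map_diag_apply_setOf_ne hdiag, zero_add, Measure.smul_apply,
    hres_f, hres_g, hprod, smul_eq_mul, ← mul_assoc, ENNReal.inv_mul_cancel hc_ne_zero hc_ne_top,
    one_mul]

/-- The maximal coupling gives the complement of the diagonal mass equal to the
total variation distance `sup_B |μ(B) - ν(B)| = 1 - ∫ min(f,g) dλ`. -/
theorem stmt1 {X : Type*} [MeasurableSpace X] (lam : Measure X) [SigmaFinite lam]
    (f g : X → ℝ≥0∞) (hf : Measurable f) (hg : Measurable g)
    (μ ν : Measure X) [IsProbabilityMeasure μ] [IsProbabilityMeasure ν]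
    (hμ : μ = lam.withDensity f) (hν : ν = lam.withDensity g)
    (hlt : ∫⁻ x, min (f x) (g x) ∂lam < 1)
    (hdiag : MeasurableSet {p : X × X | p.1 = p.2})
    (η : Measure (X × X))
    (hη : η = (lam.withDensity (fun u => min (f u) (g u))).map (fun u => (u, u))
        + (1 - ∫⁻ x, min (f x) (g x) ∂lam)⁻¹ •
          ((lam.withDensity (fun x => f x - min (f x) (g x))).prod
            (lam.withDensity (fun y => g y - min (f y) (g y))))) :
    η {p : X × X | p.1 ≠ p.2} = 1 - ∫⁻ x, min (f x) (g x) ∂lam ∧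
    (⨆ B ∈ {B : Set X | MeasurableSet B}, max (μ B - ν B) (ν B - μ B))
      = 1 - ∫⁻ x, min (f x) (g x) ∂lam :=
  stmt1_general lam f g hf hg μ ν hμ hν hlt hdiag η hη
end

section
/- Let G : X → (0, ‖G‖_∞] be bounded measurable, M a Markov kernel, μ a probability measure with μ(G) > 0, and suppose there exist a set C ⊆ X, constants ε⁻ > 0 and a probability measure ν, such that G(x) M(B)(x) ≥ ε⁻ ν(C ∩ B) for all x ∈ C and measurable B, and μ(C) ≥ c₀ > 0, and inf_{x ∈ C} h(x) ≥ h₀ > 0 for a non-negative measurable h. Then Φ(μ)(h) := μ(G·M(h))/μ(G) ≥ c₀ ε⁻ ν(C) h₀ / ‖G‖_∞. -/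
/-!
On the small set `C`, the minorization with `B = C` and the bound `h ≥ h₀` give
`G x · M(h)(x) ≥ G x · h₀ M(C)(x) ≥ ε ν(C) h₀`. Integrating over `C` bounds the numerator
`μ(G · M(h))` below by `c₀ ε ν(C) h₀`, and the denominator `μ(G)` is at most `‖G‖_∞`.
-/

open MeasureTheory ProbabilityTheory

section

variable {X : Type*} [MeasurableSpace X]

lemma mul_measureReal_le_integral_of_le_on {μ : Measure X} [IsFiniteMeasure μ] {f : X → ℝ}
    {s : Set X} {c : ℝ} (hs : MeasurableSet s) (hf : Integrable f μ) (hf0 : ∀ x, 0 ≤ f x)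
    (hc : ∀ x ∈ s, c ≤ f x) :
    c * μ.real s ≤ ∫ x, f x ∂μ :=
  (setIntegral_ge_of_const_le_real hs (measure_ne_top μ s) hc hf.integrableOn).trans
    (setIntegral_le_integral hf (ae_of_all _ hf0))

lemma integral_le_of_forall_le {μ : Measure X} [IsProbabilityMeasure μ] {f : X → ℝ} {c : ℝ}
    (hf : Integrable f μ) (hc : ∀ x, f x ≤ c) :
    ∫ x, f x ∂μ ≤ c :=
  calc ∫ x, f x ∂μ ≤ ∫ _, c ∂μ := integral_mono hf (integrable_const c) hc
    _ = c := by simp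

lemma mul_mul_le_mul_integral_of_minorization {ρ : Measure X} [IsFiniteMeasure ρ]
    {ν : Measure X} {C : Set X} (hC : MeasurableSet C) {g ε : ℝ} (hg : 0 ≤ g)
    (hminor : ε * ν.real C ≤ g * ρ.real C)
    {h : X → ℝ} (hint : Integrable h ρ) (hh0 : ∀ x, 0 ≤ h x)
    {h₀ : ℝ} (hh₀ : 0 ≤ h₀) (hinf : ∀ x ∈ C, h₀ ≤ h x) :
    ε * ν.real C * h₀ ≤ g * ∫ y, h y ∂ρ :=
  calc ε * ν.real C * h₀ ≤ g * ρ.real C * h₀ := mul_le_mul_of_nonneg_right hminor hh₀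
    _ = g * (h₀ * ρ.real C) := by ring
    _ ≤ g * ∫ y, h y ∂ρ := mul_le_mul_of_nonneg_left
        (mul_measureReal_le_integral_of_le_on hC hint hh0 hinf) hg

end

theorem stmt19_general {X : Type*} [MeasurableSpace X]
    (G : X → ℝ) (hGm : Measurable G) (hGpos : ∀ x, 0 < G x)
    (CG : ℝ) (hGb : ∀ x, G x ≤ CG)
    (M : Kernel X X) [IsMarkovKernel M]
    (μ : Measure X) [IsProbabilityMeasure μ] (hμG : 0 < ∫ x, G x ∂μ)
    (C : Set X) (hC : MeasurableSet C)
    (ε : ℝ) (hε : 0 < ε) (ν : Measure X)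
    (hminor : ∀ x ∈ C, ∀ B : Set X, MeasurableSet B →
      ε * (ν (C ∩ B)).toReal ≤ G x * (M x B).toReal)
    (c₀ : ℝ) (hμC : c₀ ≤ (μ C).toReal)
    (h : X → ℝ) (hh0 : ∀ x, 0 ≤ h x)
    (h₀ : ℝ) (hh₀ : 0 < h₀) (hinf : ∀ x ∈ C, h₀ ≤ h x)
    (hint : ∀ x, Integrable h (M x))
    (hint2 : Integrable (fun x => G x * ∫ y, h y ∂(M x)) μ) :
    c₀ * ε * (ν C).toReal * h₀ / CG
      ≤ (∫ x, G x * ∫ y, h y ∂(M x) ∂μ) / (∫ x, G x ∂μ) := by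
  have hnum_nonneg : 0 ≤ ∫ x, G x * ∫ y, h y ∂(M x) ∂μ :=
    integral_nonneg fun x => mul_nonneg (hGpos x).le (integral_nonneg hh0)
  have hsmall : ∀ x ∈ C, ε * ν.real C * h₀ ≤ G x * ∫ y, h y ∂(M x) := fun x hx =>
    mul_mul_le_mul_integral_of_minorization hC (hGpos x).le
      (by simpa only [Set.inter_self, measureReal_def] using hminor x hx C hC) (hint x) hh0 hh₀.le hinf
  have hnum : c₀ * (ε * ν.real C * h₀) ≤ ∫ x, G x * ∫ y, h y ∂(M x) ∂μ :=
    calc c₀ * (ε * ν.real C * h₀) ≤ (ε * ν.real C * h₀) * μ.real C := by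
          rw [mul_comm]
          exact mul_le_mul_of_nonneg_left hμC (by positivity)
      _ ≤ _ := mul_measureReal_le_integral_of_le_on hC hint2
          (fun x => mul_nonneg (hGpos x).le (integral_nonneg hh0)) hsmall
  have hGint : Integrable G μ :=
    .of_bound hGm.aestronglyMeasurable CG <| ae_of_all _ fun x => by
      rw [Real.norm_of_nonneg (hGpos x).le]; exact hGb x
  have hden : ∫ x, G x ∂μ ≤ CG := integral_le_of_forall_le hGint hGb
  calc c₀ * ε * (ν C).toReal * h₀ / CG = c₀ * (ε * ν.real C * h₀) / CG := by
        rw [measureReal_def]; ring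
    _ ≤ _ := div_le_div₀ hnum_nonneg hnum hμG hden

/-- Lower bound for the Feynman–Kac update on a small set: under the local
minorization `G(x)M(B)(x) ≥ ε⁻ ν(C ∩ B)` on `C`, `μ(C) ≥ c₀ > 0` and
`h ≥ h₀ > 0` on `C`, one has `Φ(μ)(h) = μ(G·M(h))/μ(G) ≥ c₀ ε⁻ ν(C) h₀ / ‖G‖_∞`. -/
theorem stmt19 {X : Type*} [MeasurableSpace X]
    (G : X → ℝ) (hGm : Measurable G) (hGpos : ∀ x, 0 < G x)
    (CG : ℝ) (hCG : 0 < CG) (hGb : ∀ x, G x ≤ CG)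
    (M : Kernel X X) [IsMarkovKernel M]
    (μ : Measure X) [IsProbabilityMeasure μ] (hμG : 0 < ∫ x, G x ∂μ)
    (C : Set X) (hC : MeasurableSet C)
    (ε : ℝ) (hε : 0 < ε) (ν : Measure X) [IsProbabilityMeasure ν]
    (hminor : ∀ x ∈ C, ∀ B : Set X, MeasurableSet B →
      ε * (ν (C ∩ B)).toReal ≤ G x * (M x B).toReal)
    (c₀ : ℝ) (hc₀ : 0 < c₀) (hμC : c₀ ≤ (μ C).toReal)
    (h : X → ℝ) (hhm : Measurable h) (hh0 : ∀ x, 0 ≤ h x)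
    (h₀ : ℝ) (hh₀ : 0 < h₀) (hinf : ∀ x ∈ C, h₀ ≤ h x)
    (hint : ∀ x, Integrable h (M x))
    (hint2 : Integrable (fun x => G x * ∫ y, h y ∂(M x)) μ) :
    c₀ * ε * (ν C).toReal * h₀ / CG
      ≤ (∫ x, G x * ∫ y, h y ∂(M x) ∂μ) / (∫ x, G x ∂μ) :=
  stmt19_general G hGm hGpos CG hGb M μ hμG C hC ε hε ν hminor c₀ hμC h hh0 h₀ hh₀ hinf hint hint2
end
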